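/- arXiv:1810.06722 — 2 statements merged into one kernel-verified Lean document; each statement's English description precedes it below -/
import Mathlib

section
/- Fix n < l and consider the tree T_l of Boolean lists of length at most l ordered by the prefix relation. Let u be a node of length n, and let w₀, w₁ be two nodes of length l both extending u. Then there exists an order-automorphism π of T_l, preserving lengths, such that π(w₀) = w₁ and π fixes every node that does not have u as a proper prefix (in particular π fixes all nodes of length ≤ n). -/
/-!
XOR-ing every node of the cone above `u` position-wise with the fixed mask
`w₀ ⊕ w₁` is a length-preserving involution of the tree that respects prefixes. The mask
vanishes on the first `|u|` positions, because `w₀` and `w₁` both extend `u`, so the cone is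
mapped onto itself, while `w₀ ↦ w₁` and all nodes outside the cone stay put.
-/

namespace List

def maskXor (f : ℕ → Bool) (t : List Bool) : List Bool :=
  t.mapIdx fun i b => b ^^ f i

variable {f : ℕ → Bool} {s t : List Bool}

@[simp]
theorem length_maskXor : (maskXor f t).length = t.length :=
  length_mapIdx

@[simp]
theorem maskXor_maskXor : maskXor f (maskXor f t) = t := by
  refine ext_getElem (by simp) fun i _ _ => ?_
  simp [maskXor]

theorem IsPrefix.maskXor (h : s <+: t) : maskXor f s <+: maskXor f t := by
  obtain ⟨r, rfl⟩ := h
  simp only [List.maskXor, mapIdx_append]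
  exact prefix_append _ _

theorem maskXor_eq_self (hf : ∀ i < t.length, f i = false) : maskXor f t = t :=
  ext_getElem length_maskXor fun i _ hi => by simp [maskXor, hf i hi]

theorem maskXor_xor_getD_eq (h : s.length = t.length) :
    maskXor (fun i => s.getD i false ^^ t.getD i false) s = t :=
  ext_getElem (by simp [h]) fun i hi _ => by simp_all [maskXor]

end List

open List

section ConeXor

variable (u : List Bool) (f : ℕ → Bool)

def coneXor (t : List Bool) : List Bool :=
  if u <+: t then maskXor f t else t

variable {u f}

theorem coneXor_of_prefix {t : List Bool} (h : u <+: t) : coneXor u f t = maskXor f t :=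
  if_pos h

theorem coneXor_of_not_prefix {t : List Bool} (h : ¬ u <+: t) : coneXor u f t = t :=
  if_neg h

@[simp]
theorem length_coneXor (t : List Bool) : (coneXor u f t).length = t.length := by
  unfold coneXor; split_ifs <;> simp

theorem prefix_maskXor_of_prefix (hf : ∀ i < u.length, f i = false) {t : List Bool}
    (h : u <+: t) : u <+: maskXor f t := by
  simpa [maskXor_eq_self hf] using h.maskXor (f := f)

theorem coneXor_involutive (hf : ∀ i < u.length, f i = false) :
    Function.Involutive (coneXor u f) := by
  intro t
  by_cases h : u <+: t
  · rw [coneXor_of_prefix h, coneXor_of_prefix (prefix_maskXor_of_prefix hf h), maskXor_maskXor]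
  · rw [coneXor_of_not_prefix h, coneXor_of_not_prefix h]

theorem coneXor_prefix_coneXor (hf : ∀ i < u.length, f i = false) {s t : List Bool}
    (hst : s <+: t) : coneXor u f s <+: coneXor u f t := by
  by_cases hs : u <+: s
  · rw [coneXor_of_prefix hs, coneXor_of_prefix (hs.trans hst)]
    exact hst.maskXor
  by_cases ht : u <+: t
  · rw [coneXor_of_not_prefix hs, coneXor_of_prefix ht]
    rcases prefix_or_prefix_of_prefix hst ht with hsu | hus
    · exact hsu.trans (prefix_maskXor_of_prefix hf ht)
    · exact absurd hus hs
  · rw [coneXor_of_not_prefix hs, coneXor_of_not_prefix ht]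
    exact hst

theorem coneXor_prefix_coneXor_iff (hf : ∀ i < u.length, f i = false) {s t : List Bool} :
    coneXor u f s <+: coneXor u f t ↔ s <+: t := by
  refine ⟨fun h => ?_, coneXor_prefix_coneXor hf⟩
  simpa [coneXor_involutive hf _] using coneXor_prefix_coneXor hf h

end ConeXor

theorem stmt_11_general (l : ℕ)
    (u w₀ w₁ : {t : List Bool // t.length ≤ l})
    (hw₀ : w₀.1.length = l) (hw₁ : w₁.1.length = l)
    (h₀ : u.1 <+: w₀.1) (h₁ : u.1 <+: w₁.1) :
    ∃ π : Equiv {t : List Bool // t.length ≤ l} {t : List Bool // t.length ≤ l},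
      (∀ a b : {t : List Bool // t.length ≤ l}, a.1 <+: b.1 ↔ (π a).1 <+: (π b).1) ∧
      (∀ a : {t : List Bool // t.length ≤ l}, (π a).1.length = a.1.length) ∧
      π w₀ = w₁ ∧
      (∀ a : {t : List Bool // t.length ≤ l}, ¬ (u.1 <+: a.1 ∧ u.1 ≠ a.1) → π a = a) := by
  set f : ℕ → Bool := fun i => w₀.1.getD i false ^^ w₁.1.getD i false
  have hf : ∀ i < u.1.length, f i = false := fun i hi => by
    simp [f, getD_eq_getElem?_getD, getElem?_eq_getElem (hi.trans_le h₀.length_le),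
      getElem?_eq_getElem (hi.trans_le h₁.length_le), ← h₀.getElem hi, ← h₁.getElem hi]
  refine ⟨(Function.Involutive.toPerm _ (coneXor_involutive hf)).subtypeEquiv
    fun t => by simp, fun a b => (coneXor_prefix_coneXor_iff hf).symm, fun a => length_coneXor _,
    Subtype.ext ?_, fun a ha => Subtype.ext ?_⟩
  · exact (coneXor_of_prefix h₀).trans (maskXor_xor_getD_eq (hw₀.trans hw₁.symm))
  · by_cases h : u.1 <+: a.1
    · have hua : u.1 = a.1 := not_not.mp fun hne => ha ⟨h, hne⟩
      exact (coneXor_of_prefix h).trans (maskXor_eq_self (hua ▸ hf))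
    · exact coneXor_of_not_prefix h

theorem stmt_11 (n l : ℕ) (hnl : n < l)
    (u w₀ w₁ : {t : List Bool // t.length ≤ l})
    (hu : u.1.length = n) (hw₀ : w₀.1.length = l) (hw₁ : w₁.1.length = l)
    (h₀ : u.1 <+: w₀.1) (h₁ : u.1 <+: w₁.1) :
    ∃ π : Equiv {t : List Bool // t.length ≤ l} {t : List Bool // t.length ≤ l},
      (∀ a b : {t : List Bool // t.length ≤ l}, a.1 <+: b.1 ↔ (π a).1 <+: (π b).1) ∧
      (∀ a : {t : List Bool // t.length ≤ l}, (π a).1.length = a.1.length) ∧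
      π w₀ = w₁ ∧
      (∀ a : {t : List Bool // t.length ≤ l}, ¬ (u.1 <+: a.1 ∧ u.1 ≠ a.1) → π a = a) :=
  stmt_11_general l u w₀ w₁ hw₀ hw₁ h₀ h₁
end

section
/- Let λ be a countable limit ordinal. Then there exists a family of functions C_δ : ℕ → δ, indexed by the limit ordinals δ < λ, such that: (1) each C_δ is strictly increasing and cofinal in δ; and (2) for all limit ordinals δ, γ < λ and all n, m ∈ ℕ with (δ, n) ≠ (γ, m), the ordinal C_δ(n) is not equal to C_γ(m), nor to C_γ(m) + 1, nor is C_δ(n) + 1 equal to C_γ(m). -/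
/-!
Code the ordinals below `lam` injectively by naturals `e δ`, and fix for each limit `δ < lam` a
monotone cofinal sequence `x δ`. Put `C δ n = ω * (x δ n / ω) + 2 * Nat.pair (e δ) n`. The first
summand keeps `C δ` cofinal in `δ` and, since a limit is a multiple of `ω`, below `δ`; the finite
part `C δ n % ω` is even and determines `(δ, n)`, so neither `C δ n = C γ m` nor
`C δ n = C γ m + 1` can happen for `(δ, n) ≠ (γ, m)`.
-/

open Ordinal Filter

namespace Ordinal

theorem countable_Iio_of_card_le_aleph0 {o : Ordinal} (ho : o.card ≤ Cardinal.aleph0) :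
    (Set.Iio o).Countable := by
  rw [← Cardinal.le_aleph0_iff_set_countable, Cardinal.mk_Iio_ordinal]
  simpa using Cardinal.lift_le.mpr ho

theorem exists_monotone_cofinal_seq {δ : Ordinal} (hδ : 0 < δ) (hc : δ.card ≤ Cardinal.aleph0) :
    ∃ x : ℕ → Ordinal, Monotone x ∧ (∀ n, x n < δ) ∧ ∀ β < δ, ∃ n, β ≤ x n := by
  have : Countable (Set.Iio δ) := (countable_Iio_of_card_le_aleph0 hc).to_subtype
  have : Nonempty (Set.Iio δ) := ⟨⟨0, hδ⟩⟩
  obtain ⟨x, hmono, htends⟩ := exists_seq_monotone_tendsto_atTop_atTop (Set.Iio δ)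
  refine ⟨fun n => x n, fun _ _ hnm => hmono hnm, fun n => (x n).2, fun β hβ => ?_⟩
  exact (tendsto_atTop.1 htends ⟨β, hβ⟩).exists

theorem omega0_mul_div_add_omega0_le {β δ : Ordinal} (hδ : Order.IsSuccLimit δ) (hβ : β < δ) :
    ω * (β / ω) + ω ≤ δ := by
  obtain ⟨k, rfl⟩ := isSuccPrelimit_iff_omega0_dvd.1 hδ.isSuccPrelimit
  rw [← mul_add_one]
  gcongr
  exact Order.add_one_le_of_lt ((lt_mul_iff_div_lt omega0_ne_zero).1 hβ)

theorem omega0_mul_add_natCast_mod (q : Ordinal) (k : ℕ) : (ω * q + k) % ω = k := by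
  rw [mul_add_mod_self, mod_eq_of_lt (natCast_lt_omega0 k)]

theorem omega0_mul_add_natCast_lt {p q : Ordinal} {i j : ℕ} (hpq : p ≤ q) (hij : i < j) :
    ω * p + i < ω * q + j := by
  rcases hpq.lt_or_eq with hpq | rfl
  · calc ω * p + i < ω * p + ω := add_lt_add_right (natCast_lt_omega0 i) _
      _ = ω * (p + 1) := (mul_add_one _ _).symm
      _ ≤ ω * q := by gcongr; exact Order.add_one_le_of_lt hpq
      _ ≤ ω * q + j := le_self_add
  · exact add_lt_add_right (by exact_mod_cast hij) _

noncomputable def codedLadder (x : ℕ → Ordinal) (c n : ℕ) : Ordinal :=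
  ω * (x n / ω) + (2 * Nat.pair c n : ℕ)

variable {x : ℕ → Ordinal} {c : ℕ}

theorem codedLadder_lt {δ : Ordinal} (hδ : Order.IsSuccLimit δ) (hx : ∀ n, x n < δ) (n : ℕ) :
    codedLadder x c n < δ :=
  (add_lt_add_right (natCast_lt_omega0 _) _).trans_le (omega0_mul_div_add_omega0_le hδ (hx n))

theorem codedLadder_strictMono (hx : Monotone x) : StrictMono (codedLadder x c) := by
  intro a b hab
  have := Nat.pair_lt_pair_right c hab
  exact omega0_mul_add_natCast_lt (div_le_left (hx hab.le) ω) (by omega)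

theorem exists_le_codedLadder (hx : Monotone x) {β : Ordinal} {k : ℕ} (hβ : β ≤ x k) :
    ∃ n, β ≤ codedLadder x c n := by
  obtain ⟨s, hs⟩ := lt_omega0.1 (mod_lt β omega0_ne_zero)
  refine ⟨max k s, ?_⟩
  have hsn : s ≤ 2 * Nat.pair c (max k s) := by
    have := Nat.right_le_pair c (max k s)
    omega
  rw [← div_add_mod β ω, hs, codedLadder]
  gcongr
  exact div_le_left (hβ.trans (hx (le_max_left k s))) ω

theorem codedLadder_add_natCast_mod (x : ℕ → Ordinal) (c n i : ℕ) :
    (codedLadder x c n + i) % ω = (2 * Nat.pair c n + i : ℕ) := by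
  rw [codedLadder, add_assoc, ← Nat.cast_add, omega0_mul_add_natCast_mod]

theorem codedLadder_ne {y : ℕ → Ordinal} {d n m : ℕ} (h : (c, n) ≠ (d, m)) :
    codedLadder x c n ≠ codedLadder y d m ∧ codedLadder x c n ≠ codedLadder y d m + 1 ∧
      codedLadder x c n + 1 ≠ codedLadder y d m := by
  have hmod : ∀ i j : ℕ, codedLadder x c n + i = codedLadder y d m + j →
      2 * Nat.pair c n + i = 2 * Nat.pair d m + j := fun i j hij => by
    exact_mod_cast (codedLadder_add_natCast_mod x c n i).symm.trans
      ((congrArg (· % ω) hij).trans (codedLadder_add_natCast_mod y d m j))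
  have hpair : Nat.pair c n ≠ Nat.pair d m := fun he => h (by simp_all [Nat.pair_eq_pair])
  refine ⟨fun he => ?_, fun he => ?_, fun he => ?_⟩
  · have := hmod 0 0 (by simpa using he)
    omega
  · have := hmod 0 1 (by simpa using he)
    omega
  · have := hmod 1 0 (by simpa using he)
    omega

end Ordinal

theorem stmt_16_general (lam : Ordinal)
    (hcount : lam.card ≤ Cardinal.aleph0) :
    ∃ C : Ordinal → ℕ → Ordinal,
      (∀ δ : Ordinal, δ < lam → Order.IsSuccLimit δ →
        StrictMono (C δ) ∧ (∀ n, C δ n < δ) ∧ (∀ β < δ, ∃ n, β ≤ C δ n)) ∧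
      (∀ δ γ : Ordinal, δ < lam → Order.IsSuccLimit δ → γ < lam → Order.IsSuccLimit γ →
        ∀ n m : ℕ, (δ, n) ≠ (γ, m) →
          C δ n ≠ C γ m ∧ C δ n ≠ C γ m + 1 ∧ C δ n + 1 ≠ C γ m) := by
  obtain ⟨e, he⟩ := Set.countable_iff_exists_injOn.1 (countable_Iio_of_card_le_aleph0 hcount)
  choose! x hx_mono hx_lt hx_cof using fun δ (hδ : δ < lam) (hδl : Order.IsSuccLimit δ) =>
    exists_monotone_cofinal_seq hδl.bot_lt ((card_le_card hδ.le).trans hcount)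
  refine ⟨fun δ => codedLadder (x δ) (e δ), fun δ hδ hδl => ?_, ?_⟩
  · refine ⟨codedLadder_strictMono (hx_mono δ hδ hδl), codedLadder_lt hδl (hx_lt δ hδ hδl),
      fun β hβ => ?_⟩
    obtain ⟨k, hk⟩ := hx_cof δ hδ hδl β hβ
    exact exists_le_codedLadder (hx_mono δ hδ hδl) hk
  · intro δ γ hδ _ hγ _ n m hne
    exact codedLadder_ne fun h => hne (by
      obtain ⟨hc, rfl⟩ := Prod.ext_iff.1 h
      rw [he hδ hγ hc])

theorem stmt_16 (lam : Ordinal) (hlim : Order.IsSuccLimit lam)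
    (hcount : lam.card ≤ Cardinal.aleph0) :
    ∃ C : Ordinal → ℕ → Ordinal,
      (∀ δ : Ordinal, δ < lam → Order.IsSuccLimit δ →
        StrictMono (C δ) ∧ (∀ n, C δ n < δ) ∧ (∀ β < δ, ∃ n, β ≤ C δ n)) ∧
      (∀ δ γ : Ordinal, δ < lam → Order.IsSuccLimit δ → γ < lam → Order.IsSuccLimit γ →
        ∀ n m : ℕ, (δ, n) ≠ (γ, m) →
          C δ n ≠ C γ m ∧ C δ n ≠ C γ m + 1 ∧ C δ n + 1 ≠ C γ m) :=
  stmt_16_general lam hcount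
end
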